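/- Let a, ε > 0 and m ≥ 0, and define φ̃ : ℝ → ℝ by φ̃(t) = m + 1/(2√(ε² + t²)). Then, writing φ̃′ and φ̃″ for the first and second derivatives of φ̃, the quantity 2(φ̃′(0))²·a⁶ − a·φ̃″(0)·a⁴ − φ̃(0)·φ̃″(0)·a⁶ − 2a² − 2a·φ̃(0)·a² equals F(a, ε, m) := −2a² − 2a³m − a³/ε + a⁵/(2ε³) + m·a⁶/(2ε³) + a⁶/(4ε⁴). Moreover: (i) for every fixed a > 0 and m ≥ 0 there exists ε₀ > 0 such that F(a, ε, m) > 0 for all 0 < ε < ε₀; and (ii) for every fixed ε > 0 and m ≥ 0 there exists a₀ > 0 such that F(a, ε, m) > 0 for all a > a₀. -/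

import Mathlib

/-!
Since `φ̃` is even, `φ̃'(0) = 0`, and differentiating `φ̃'(t) = -t / (2 (ε² + t²)^{3/2})` once more
gives `φ̃''(0) = -1/(2ε³)`; the identity is then algebra. For the sign,
`ε⁴ F / a² = (a⁴/4 - 2ε⁴) + aε(a²/2 - ε²) + maε(a³/2 - 2ε³)`, and every bracket is positive as soon
as `a ≥ 2ε`, which holds both for small `ε` and for large `a`.
-/

/-- The quantity `F(a, ε, m)` controlling the sign of `M + N` at the midpoint of the
segment in the three-point configuration `p₁ = (0,0,a)`, `p₂ = (0,0,−a)`, `p₃ = (0,ε,0)`. -/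
noncomputable def stmtF (a ε m : ℝ) : ℝ :=
  -2 * a ^ 2 - 2 * a ^ 3 * m - a ^ 3 / ε + a ^ 5 / (2 * ε ^ 3)
    + m * a ^ 6 / (2 * ε ^ 3) + a ^ 6 / (4 * ε ^ 4)

noncomputable def phiTilde (ε m t : ℝ) : ℝ := m + 1 / (2 * √(ε ^ 2 + t ^ 2))

lemma hasDerivAt_phiTilde {ε : ℝ} (hε : ε ≠ 0) (m t : ℝ) :
    HasDerivAt (phiTilde ε m) (-t / (2 * (ε ^ 2 + t ^ 2) * √(ε ^ 2 + t ^ 2))) t := by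
  have hpos : 0 < ε ^ 2 + t ^ 2 := by positivity
  have hsqrt : HasDerivAt (fun t => √(ε ^ 2 + t ^ 2)) (2 * t / (2 * √(ε ^ 2 + t ^ 2))) t := by
    simpa using ((hasDerivAt_pow 2 t).const_add (ε ^ 2)).sqrt hpos.ne'
  refine (((hasDerivAt_const t 1).div (hsqrt.const_mul 2) (by positivity)).const_add m).congr_deriv
    ?_
  field_simp
  rw [Real.sq_sqrt hpos.le]
  ring

lemma deriv_phiTilde {ε : ℝ} (hε : ε ≠ 0) (m : ℝ) :
    deriv (phiTilde ε m) = fun t => -t / (2 * (ε ^ 2 + t ^ 2) * √(ε ^ 2 + t ^ 2)) :=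
  funext fun t => (hasDerivAt_phiTilde hε m t).deriv

lemma deriv_deriv_phiTilde_zero {ε : ℝ} (hε : 0 < ε) (m : ℝ) :
    deriv (deriv (phiTilde ε m)) 0 = -1 / (2 * ε ^ 3) := by
  have hden : DifferentiableAt ℝ (fun t : ℝ => 2 * (ε ^ 2 + t ^ 2) * √(ε ^ 2 + t ^ 2)) 0 := by
    fun_prop (disch := positivity)
  have hden0 : 2 * (ε ^ 2 + 0 ^ 2) * √(ε ^ 2 + 0 ^ 2) = 2 * ε ^ 3 := by
    rw [zero_pow two_ne_zero, add_zero, Real.sqrt_sq hε.le]; ring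
  rw [deriv_phiTilde hε.ne']
  refine (((hasDerivAt_id' 0).neg.div hden.hasDerivAt (by positivity)).congr_deriv ?_).deriv
  rw [hden0]
  field_simp
  ring

lemma deriv_phiTilde_zero {ε : ℝ} (hε : ε ≠ 0) (m : ℝ) : deriv (phiTilde ε m) 0 = 0 := by
  simp [deriv_phiTilde hε]

lemma stmtF_eq {a ε : ℝ} (hε : ε ≠ 0) (m : ℝ) :
    stmtF a ε m = a ^ 2 / ε ^ 4 * ((a ^ 4 / 4 - 2 * ε ^ 4) + a * ε * (a ^ 2 / 2 - ε ^ 2)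
      + m * a * ε * (a ^ 3 / 2 - 2 * ε ^ 3)) := by
  unfold stmtF
  field_simp
  ring

lemma stmtF_pos {a ε m : ℝ} (hε : 0 < ε) (hm : 0 ≤ m) (ha : 2 * ε ≤ a) : 0 < stmtF a ε m := by
  have ha0 : 0 < a := by linarith
  have h2 : 4 * ε ^ 2 ≤ a ^ 2 := by nlinarith
  have h3 : 8 * ε ^ 3 ≤ a ^ 3 := by nlinarith
  have h4 : 16 * ε ^ 4 ≤ a ^ 4 := by nlinarith
  rw [stmtF_eq hε.ne']
  refine mul_pos (by positivity) (add_pos_of_pos_of_nonneg (add_pos ?_ ?_) ?_)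
  · nlinarith [pow_pos hε 4]
  · exact mul_pos (by positivity) (by nlinarith)
  · exact mul_nonneg (by positivity) (by nlinarith [pow_pos hε 3])

/-- **Failure of strong stability for the three-point configuration.**
With `φ̃(t) = m + 1/(2√(ε² + t²))`, the midpoint value of `M + N` equals `F(a, ε, m)`;
moreover `F(a, ε, m) > 0` for `ε` small (with `a, m` fixed) and for `a` large
(with `ε, m` fixed). -/
theorem stmt_10 :
    (∀ a ε m : ℝ, 0 < a → 0 < ε → 0 ≤ m →
      (2 * (deriv (fun t : ℝ => m + 1 / (2 * Real.sqrt (ε ^ 2 + t ^ 2))) 0) ^ 2 * a ^ 6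
        - a * deriv (deriv (fun t : ℝ => m + 1 / (2 * Real.sqrt (ε ^ 2 + t ^ 2)))) 0 * a ^ 4
        - (m + 1 / (2 * Real.sqrt (ε ^ 2 + (0 : ℝ) ^ 2)))
            * deriv (deriv (fun t : ℝ => m + 1 / (2 * Real.sqrt (ε ^ 2 + t ^ 2)))) 0 * a ^ 6
        - 2 * a ^ 2
        - 2 * a * (m + 1 / (2 * Real.sqrt (ε ^ 2 + (0 : ℝ) ^ 2))) * a ^ 2)
        = stmtF a ε m) ∧
    (∀ a m : ℝ, 0 < a → 0 ≤ m → ∃ ε₀ > 0, ∀ ε : ℝ, 0 < ε → ε < ε₀ → stmtF a ε m > 0) ∧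
    (∀ ε m : ℝ, 0 < ε → 0 ≤ m → ∃ a₀ > 0, ∀ a : ℝ, a > a₀ → stmtF a ε m > 0) := by
  refine ⟨fun a ε m _ hε _ => ?_, fun a m ha hm => ?_, fun ε m hε hm => ?_⟩
  · have hφ : (fun t : ℝ => m + 1 / (2 * √(ε ^ 2 + t ^ 2))) = phiTilde ε m := rfl
    rw [hφ, deriv_phiTilde_zero hε.ne', deriv_deriv_phiTilde_zero hε,
      show ε ^ 2 + (0 : ℝ) ^ 2 = ε ^ 2 by ring, Real.sqrt_sq hε.le]
    unfold stmtF
    field_simp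
    ring
  · exact ⟨a / 2, by positivity, fun ε hε hlt => stmtF_pos hε hm (by linarith)⟩
  · exact ⟨2 * ε, by positivity, fun a ha => stmtF_pos hε hm ha.le⟩
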